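/- arXiv:1301.6635 — 3 statements merged into one kernel-verified Lean document; each statement's English description precedes it below -/
import Mathlib

section
/- Let v ∈ ℕ^n, let s ∈ ℕ^∞ be finitely supported, and let k = Σ_i s_i. Then the number of vectors u ∈ ℕ^n with u ≤ v ∧ 1 (componentwise minimum with 1), Σ_j u_j = k, and bar(v − u) = bar v ⊖ s equals (bar v choose s) = ∏_i (bar v_i choose s_i). -/
open scoped BigOperators

/-- `countVec v k` is the number of entries of `v` equal to `k + 1`; i.e. it represents the
count vector `bar v = (bar v_1, bar v_2, ...)` in 0-based indexing (index `k` ↦ value `k+1`). -/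
def countVec {n : ℕ} (v : Fin n → ℕ) (k : ℕ) : ℕ :=
  (Finset.univ.filter fun j => v j = k + 1).card

/-!
A vector `u ≤ v ∧ 1` is the indicator of a set `S` of positions where `v` is nonzero. Let
`t i` be the number of `j ∈ S` with `v j = i`. Subtracting `u` moves exactly these entries from
level `i` to level `i - 1`, so `bar (v - u) = bar v - t + L t`. Hence `bar (v - u) = bar v ⊖ s`
says that `t - s` is invariant under the shift `L`; being finitely supported it vanishes, so
`t = s`, and then also `Σ u = Σ t = Σ s = k`. Such sets `S` are obtained by choosing,
independently at every level `i`, `s i` of the `bar v_i` positions: `∏ (bar v_i choose s_i)`.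
-/

open Finset

section FiberCount

variable {α β : Type*} [Fintype α] [DecidableEq α] [DecidableEq β]

theorem card_finset_fiberwise_card_eq_prod_choose (f : α → β) (t : Finset β)
    (hf : ∀ a, f a ∈ t) (c : β → ℕ) :
    #{S : Finset α | ∀ b ∈ t, #{a ∈ S | f a = b} = c b} =
      ∏ b ∈ t, (#{a | f a = b}).choose (c b) := by
  simp_rw [← card_powersetCard, ← card_pi]
  have hfiber : ∀ F ∈ t.pi fun b => powersetCard (c b) {a | f a = b}, ∀ b (hb : b ∈ t),
      ({a | a ∈ F (f a) (hf a) ∧ f a = b} : Finset α) = F b hb := by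
    intro F hF b hb
    ext a
    simp only [mem_filter, mem_univ, true_and]
    refine ⟨fun ⟨ha, hab⟩ => hab ▸ ha, fun ha => ?_⟩
    obtain rfl : f a = b := by simpa using (mem_powersetCard.1 (mem_pi.1 hF b hb)).1 ha
    exact ⟨ha, rfl⟩
  refine card_nbij' (fun S b _ => {a ∈ S | f a = b})
    (fun F => ({a | a ∈ F (f a) (hf a)} : Finset α))
    (fun S hS => ?_) (fun F hF => ?_) (fun S _ => ?_) (fun F hF => ?_)
  · simp only [coe_filter, mem_univ, true_and, Set.mem_ofPred_eq, mem_coe, mem_pi,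
      mem_powersetCard] at hS ⊢
    exact fun b hb => ⟨fun a ha => by simp_all, hS b hb⟩
  · simp only [coe_filter, mem_univ, true_and, Set.mem_ofPred_eq, filter_filter]
    intro b hb
    rw [hfiber F hF b hb]
    exact (mem_powersetCard.1 (mem_pi.1 hF b hb)).2
  · ext a; simp
  · funext b hb
    simp only [filter_filter]
    exact hfiber F hF b hb

theorem natCard_subtype_le_one_and (P : (α → ℕ) → Prop) :
    Nat.card {u : α → ℕ // (∀ a, u a ≤ 1) ∧ P u} =
      Nat.card {S : Finset α // P fun a => if a ∈ S then 1 else 0} := by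
  have hind : ∀ u : α → ℕ, (∀ a, u a ≤ 1) →
      (fun a => if a ∈ ({a | u a = 1} : Finset α) then 1 else 0) = u := fun u hu => by
    funext a; have := hu a; simp only [mem_filter, mem_univ, true_and]; split <;> omega
  exact Nat.card_congr
    { toFun := fun u => ⟨({a | u.1 a = 1} : Finset α), by rw [hind u u.2.1]; exact u.2.2⟩
      invFun := fun S => ⟨fun a => if a ∈ S.1 then 1 else 0, fun a => by
        dsimp only; split <;> omega, S.2⟩
      left_inv := fun u => Subtype.ext (hind u u.2.1)
      right_inv := fun S => Subtype.ext (by ext a; simp) }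

end FiberCount

theorem countVec_sub_indicator_add {n : ℕ} (v : Fin n → ℕ) (S : Finset (Fin n)) (i : ℕ) :
    countVec (fun j => v j - if j ∈ S then 1 else 0) i + #{j ∈ S | v j = i + 1} =
      countVec v i + #{j ∈ S | v j = i + 1 + 1} := by
  have h1 : countVec (fun j => v j - if j ∈ S then 1 else 0) i =
      #{j ∈ S | v j = i + 1 + 1} + #{j | j ∉ S ∧ v j = i + 1} := by
    rw [countVec, ← card_filter_add_card_filter_not (· ∈ S), filter_filter, filter_filter]
    congr 2 <;> ext j <;> by_cases hj : j ∈ S <;> simp [hj]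
  have h2 : countVec v i = #{j ∈ S | v j = i + 1} + #{j | j ∉ S ∧ v j = i + 1} := by
    rw [countVec, ← card_filter_add_card_filter_not (· ∈ S), filter_filter, filter_filter]
    congr 2 <;> ext j <;> simp [and_comm]
  omega

theorem countVec_sub_indicator_eq_iff {n m : ℕ} (v : Fin n → ℕ) (S : Finset (Fin n))
    (s : ℕ → ℕ) (hv : ∀ j, v j ≤ m) (hs : ∀ i, m ≤ i → s i = 0) :
    (∀ i, (countVec (fun j => v j - if j ∈ S then 1 else 0) i : ℤ) =
        countVec v i - s i + s (i + 1)) ↔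
      ∀ i, #{j ∈ S | v j = i + 1} = s i := by
  have key := countVec_sub_indicator_add v S
  refine ⟨fun h => ?_, fun h i => by have := key i; rw [h, h] at this; omega⟩
  set d : ℕ → ℤ := fun i => #{j ∈ S | v j = i + 1} - s i
  have hd : Function.Periodic d 1 := fun i => by
    have := key i; have := h i; simp only [d]; omega
  have hd_zero : ∀ i, d (i + m) = 0 := fun i => by
    have hempty : {j ∈ S | v j = i + m + 1} = ∅ :=
      filter_eq_empty_iff.2 fun j _ => by have := hv j; omega
    simp [d, hempty, hs (i + m) (by omega)]
  intro i
  have := (hd.nat_mul m i).symm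
  rw [Nat.cast_id, mul_one, hd_zero] at this
  simp only [d] at this
  omega

theorem countVec_conditions_indicator_iff {n m : ℕ} (v : Fin n → ℕ) (s : ℕ → ℕ)
    (hv : ∀ j, v j ≤ m) (hs : ∀ i, m ≤ i → s i = 0) (S : Finset (Fin n)) :
    ((∀ j, (if j ∈ S then 1 else 0) ≤ v j) ∧
        (∑ j, (if j ∈ S then 1 else 0) = ∑ i ∈ range m, s i) ∧
        ∀ i, (countVec (fun j => v j - if j ∈ S then 1 else 0) i : ℤ) =
          (countVec v i : ℤ) - s i + s (i + 1)) ↔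
      #{j ∈ S | v j = 0} = 0 ∧ ∀ i, #{j ∈ S | v j = i + 1} = s i := by
  have hzero : (∀ j, (if j ∈ S then 1 else 0) ≤ v j) ↔ #{j ∈ S | v j = 0} = 0 := by
    rw [card_eq_zero, filter_eq_empty_iff]
    refine forall_congr' fun j => ?_
    by_cases hj : j ∈ S <;> simp [hj, Nat.one_le_iff_ne_zero]
  have hsum : #{j ∈ S | v j = 0} = 0 → (∀ i, #{j ∈ S | v j = i + 1} = s i) →
      ∑ j, (if j ∈ S then 1 else 0) = ∑ i ∈ range m, s i := by
    intro h0 hT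
    simp only [sum_boole, Nat.cast_id, filter_mem_eq_inter, univ_inter]
    rw [card_eq_sum_card_fiberwise fun j _ => mem_range.2 (Nat.lt_succ_of_le (hv j)),
      sum_range_succ', h0]
    simp [hT]
  rw [countVec_sub_indicator_eq_iff v S s hv hs, hzero]
  tauto

theorem natCard_eq_prod_choose_of_le {n m : ℕ} (v : Fin n → ℕ) (s : ℕ → ℕ)
    (hv : ∀ j, v j ≤ m) (hs : ∀ i, m ≤ i → s i = 0) :
    Nat.card {u : Fin n → ℕ // (∀ j, u j ≤ min (v j) 1) ∧ (∑ j, u j = ∑ i ∈ range m, s i) ∧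
        ∀ i, (countVec (fun j => v j - u j) i : ℤ) =
          (countVec v i : ℤ) - s i + s (i + 1)} =
      ∏ i ∈ range m, (countVec v i).choose (s i) := by
  set c : ℕ → ℕ := fun b => if b = 0 then 0 else s (b - 1)
  have hlevels : ∀ S : Finset (Fin n),
      (#{j ∈ S | v j = 0} = 0 ∧ ∀ i, #{j ∈ S | v j = i + 1} = s i) ↔
        ∀ b ∈ range (m + 1), #{j ∈ S | v j = b} = c b := by
    intro S
    simp only [range_add_one', forall_mem_insert, forall_mem_map]
    refine and_congr Iff.rfl ⟨fun h i _ => h i, fun h i => ?_⟩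
    by_cases hi : i < m
    · exact h i (mem_range.2 hi)
    · rw [hs i (by omega), card_eq_zero, filter_eq_empty_iff]
      intro j _; have := hv j; omega
  have hv' : ∀ j, v j ∈ range (m + 1) := fun j => mem_range.2 (Nat.lt_succ_of_le (hv j))
  calc _ = Nat.card {S : Finset (Fin n) //
          ∀ b ∈ range (m + 1), #{j ∈ S | v j = b} = c b} := by
        simp_rw [← hlevels, ← countVec_conditions_indicator_iff v s hv hs]
        refine .trans (Nat.card_congr (Equiv.subtypeEquivRight fun u => ?_))
          (natCard_subtype_le_one_and fun u => (∀ j, u j ≤ v j) ∧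
            (∑ j, u j = ∑ i ∈ range m, s i) ∧
            ∀ i, (countVec (fun j => v j - u j) i : ℤ) = countVec v i - s i + s (i + 1))
        simp only [le_min_iff, forall_and]
        tauto
    _ = ∏ b ∈ range (m + 1), (#{j | v j = b}).choose (c b) := by
        rw [Nat.card_eq_fintype_card, Fintype.card_subtype,
          card_finset_fiberwise_card_eq_prod_choose v _ hv']
    _ = _ := by simp [prod_range_succ', c, countVec]

-- Sequences in `ℕ^∞` are 0-based: index `i` stands for position `i + 1`.
/-- The number of `u ∈ ℕ^n` with `u ≤ v ∧ 1`, `Σ_j u_j = k = Σ_i s_i` and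
`bar(v - u) = bar v ⊖ s = bar v - s + Ls` equals `(bar v choose s) = ∏_i (bar v_i choose s_i)`.
Sequences in `ℕ^∞` are 0-based here: index `i` stands for position `i+1`. -/
theorem stmt5 (n : ℕ) (v : Fin n → ℕ) (s : ℕ → ℕ) (hs : {i | s i ≠ 0}.Finite)
    (k : ℕ) (hk : k = ∑ᶠ i, s i) :
    Nat.card {u : Fin n → ℕ // (∀ j, u j ≤ min (v j) 1) ∧ (∑ j, u j = k) ∧
        ∀ i, (countVec (fun j => v j - u j) i : ℤ) =
          (countVec v i : ℤ) - s i + s (i + 1)} =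
      ∏ᶠ i, (countVec v i).choose (s i) := by
  obtain ⟨m, hv, hsm⟩ : ∃ m, (∀ j, v j ≤ m) ∧ ∀ i, m ≤ i → s i = 0 := by
    obtain ⟨M, hM⟩ := hs.bddAbove
    refine ⟨univ.sup v + M + 1, fun j => ?_, fun i hi => ?_⟩
    · have := le_sup (f := v) (mem_univ j); omega
    · by_contra h; have := hM h; omega
  have hout : ∀ i ∉ range m, countVec v i = 0 ∧ s i = 0 := fun i hi =>
    ⟨card_eq_zero.2 <| filter_eq_empty_iff.2 fun j _ => by have := hv j; simp at hi; omega,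
      hsm i (by simpa using hi)⟩
  rw [hk, finsum_eq_sum_of_support_subset s fun i hi => by_contra fun h => hi (hout i h).2,
    finprod_eq_prod_of_mulSupport_subset _ fun i hi => by_contra fun h => hi (by simp [hout i h])]
  exact natCard_eq_prod_choose_of_le v s hv hsm
end

section
/- Let v ∈ ℕ^n, let s ∈ ℕ^∞ be finitely supported, and let k = Σ_i s_i. Then the number of vectors u ∈ ℕ^n with u ≤ v (componentwise), Σ_j u_j = k, and bar(v − u) = bar v ⊖ s equals (bar v + Ls choose s) = ∏_i ((bar v_i + s_{i+1}) choose s_i). -/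
/-!
Substitute `w = v - u`. Writing `a_m(w) = #{j | w_j > m}`, the condition `bar w = bar v ⊖ s`
says `a_m(w) = a_m(v) - s_m` for all `m` (telescope from the top level, where everything
vanishes), and then `∑ u = ∑ s` holds automatically since `∑ w = ∑_m a_m(w)`. Now count such
`w` level by level from the top value `M + 1` of `v`: the set `T` of entries where `w` exceeds
`M` is a subset of the `bar v_{M+1}` entries of `v` equal to `M + 1`, of size
`bar v_{M+1} - s_M`, giving `(bar v_{M+1} choose s_M)` choices. Zeroing `T` and capping
everything else at `M` leaves the same problem one level lower, in which `bar v_M` has grown by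
`s_M`: this is the shift `Ls` in the binomial coefficients.
-/
open scoped BigOperators

open Finset

theorem Finset.sum_eq_sum_range_card_filter_lt {ι : Type*} [Fintype ι] {w : ι → ℕ} {M : ℕ}
    (hw : ∀ j, w j ≤ M) :
    ∑ j, w j = ∑ m ∈ range M, #{j | m < w j} := by
  simp only [card_filter]
  rw [sum_comm]
  refine sum_congr rfl fun j _ => ?_
  have hfilter : {m ∈ range M | m < w j} = range (w j) := by
    ext m
    simp only [mem_filter, mem_range]
    have := hw j
    omega
  rw [← card_filter, hfilter, card_range]

theorem Finset.card_subsets_card_add_eq {α : Type*} [Fintype α] [DecidableEq α] (A : Finset α)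
    (k : ℕ) :
    #{T : Finset α | T ⊆ A ∧ #T + k = #A} = (#A).choose k := by
  by_cases hk : k ≤ #A
  · rw [← Nat.choose_symm hk, ← card_powersetCard]
    congr 1
    ext T
    simp only [mem_filter, mem_univ, true_and, mem_powersetCard]
    exact and_congr_right fun _ => by omega
  · rw [Nat.choose_eq_zero_of_lt (by omega), card_eq_zero, filter_eq_empty_iff]
    intro T _ h
    have := card_le_card h.1
    omega

namespace Lowering

section Truncation

variable {ι : Type*} [DecidableEq ι]

/-- Removes the levels above `M`, `T` being the set of entries that exceed `M`. -/
def truncate (T : Finset ι) (M : ℕ) (w : ι → ℕ) : ι → ℕ :=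
  fun j => if j ∈ T then 0 else min (w j) M

def raise (T : Finset ι) (M : ℕ) (w : ι → ℕ) : ι → ℕ :=
  fun j => if j ∈ T then M + 1 else w j

lemma truncate_le (T : Finset ι) (M : ℕ) (w : ι → ℕ) (j : ι) : truncate T M w j ≤ M := by
  unfold truncate
  split_ifs <;> omega

lemma raise_truncate {T : Finset ι} {M : ℕ} {w : ι → ℕ} (hw : ∀ j, w j ≤ M + 1)
    (hwT : ∀ j, j ∈ T ↔ M < w j) : raise T M (truncate T M w) = w := by
  funext j
  have := hw j
  simp only [raise, truncate, hwT]
  split_ifs <;> omega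

lemma truncate_raise {T : Finset ι} {M : ℕ} {w : ι → ℕ} (hw : ∀ j, w j ≤ M)
    (hwT : ∀ j ∈ T, w j = 0) : truncate T M (raise T M w) = w := by
  funext j
  have := hw j
  simp only [raise, truncate]
  split_ifs with hj
  · exact (hwT j hj).symm
  · omega

lemma mem_iff_lt_raise {T : Finset ι} {M : ℕ} {w : ι → ℕ} (hw : ∀ j, w j ≤ M) (j : ι) :
    j ∈ T ↔ M < raise T M w j := by
  have := hw j
  unfold raise
  split_ifs with hj <;> simp only [hj, true_iff, false_iff] <;> omega

lemma le_and_eq_zero_of_le_truncate {T : Finset ι} {M : ℕ} {v w : ι → ℕ}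
    (h : w ≤ truncate T M v) : (∀ j, w j ≤ M) ∧ ∀ j ∈ T, w j = 0 := by
  refine ⟨fun j => (h j).trans (truncate_le T M v j), fun j hj => ?_⟩
  have := h j
  simp only [truncate, if_pos hj] at this
  omega

end Truncation

variable {ι : Type*} [Fintype ι]

lemma card_filter_lt_eq_zero {w : ι → ℕ} {M m : ℕ} (hw : ∀ j, w j ≤ M) (hm : M ≤ m) :
    #{j | m < w j} = 0 := by
  rw [card_eq_zero, filter_eq_empty_iff]
  intro j _
  have := hw j
  omega

lemma card_filter_lt_eq_card_filter_eq_add (w : ι → ℕ) (m : ℕ) :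
    #{j | m < w j} = #{j | w j = m + 1} + #{j | m + 1 < w j} := by
  classical
  rw [← card_union_of_disjoint (disjoint_filter.2 fun j _ h => by omega)]
  congr 1
  ext j
  simp only [mem_filter, mem_univ, true_and, mem_union]
  omega

lemma card_filter_eq_sub_add_iff {v w : ι → ℕ} {s : ℕ → ℕ} {M : ℕ} (hv : ∀ j, v j ≤ M)
    (hw : ∀ j, w j ≤ M) (hs : ∀ m, M ≤ m → s m = 0) :
    (∀ i, (#{j | w j = i + 1} : ℤ) = #{j | v j = i + 1} - s i + s (i + 1)) ↔
      ∀ m, #{j | m < w j} + s m = #{j | m < v j} := by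
  constructor
  · intro h
    -- downward induction on `m`, starting from `M`, where both counts vanish
    suffices ∀ d m, M ≤ m + d → #{j | m < w j} + s m = #{j | m < v j} from
      fun m => this M m (Nat.le_add_left M m)
    intro d
    induction d with
    | zero =>
      intro m hm
      rw [Nat.add_zero] at hm
      rw [card_filter_lt_eq_zero hw hm, card_filter_lt_eq_zero hv hm, hs m hm]
    | succ d ih =>
      intro m hm
      have habove := ih (m + 1) (by omega)
      have hlevel := h m
      have hw := card_filter_lt_eq_card_filter_eq_add w m
      have hv := card_filter_lt_eq_card_filter_eq_add v m
      omega
  · intro h i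
    have hlevel := h i
    have habove := h (i + 1)
    have hw := card_filter_lt_eq_card_filter_eq_add w i
    have hv := card_filter_lt_eq_card_filter_eq_add v i
    omega

/-- Threshold form of the paper's `bar w = bar v ⊖ s` (see `card_filter_eq_sub_add_iff`), where
`w = v - u`: for every `m`, exactly `s m` fewer entries of `w` than of `v` exceed `m`. -/
def lowerings (v : ι → ℕ) (s : ℕ → ℕ) : Set (ι → ℕ) :=
  {w | w ≤ v ∧ ∀ m, #{j | m < w j} + s m = #{j | m < v j}}

lemma lowerings_zero {s : ℕ → ℕ} (hs : ∀ m, s m = 0) : lowerings (0 : ι → ℕ) s = {0} := by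
  ext w
  refine ⟨fun hw => le_antisymm hw.1 zero_le, ?_⟩
  rintro rfl
  exact ⟨le_rfl, fun m => by rw [hs, add_zero]⟩

lemma sum_add_sum_eq_sum_of_mem_lowerings {v w : ι → ℕ} {s : ℕ → ℕ} {M : ℕ}
    (hv : ∀ j, v j ≤ M) (hw : w ∈ lowerings v s) : ∑ j, w j + ∑ m ∈ range M, s m = ∑ j, v j := by
  rw [sum_eq_sum_range_card_filter_lt hv,
    sum_eq_sum_range_card_filter_lt fun j => (hw.1 j).trans (hv j), ← sum_add_distrib]
  exact sum_congr rfl fun m _ => hw.2 m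

lemma finite_lowerings (v : ι → ℕ) (s : ℕ → ℕ) : (lowerings v s).Finite := by
  classical
  exact (Set.finite_Iic v).subset fun _ hw => hw.1

lemma card_filter_lt_eq_card_filter_lt_truncate_add [DecidableEq ι] {T : Finset ι} {M m : ℕ}
    {w : ι → ℕ} (hm : m < M) (hT : ∀ j ∈ T, m < w j) :
    #{j | m < w j} = #{j | m < truncate T M w j} + #T := by
  have hfilter :
      ({j | m < truncate T M w j} : Finset ι) = ({j | m < w j} : Finset ι) \ T := by
    ext j
    simp only [mem_filter, mem_univ, true_and, mem_sdiff]
    unfold truncate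
    split_ifs with hj
    · simp [hj]
    · simp only [hj, not_false_eq_true, and_true]
      omega
  rw [hfilter, card_sdiff_add_card_eq_card fun j hj => mem_filter.2 ⟨mem_univ j, hT j hj⟩]

lemma truncate_mem_lowerings [DecidableEq ι] {v w : ι → ℕ} {s : ℕ → ℕ} {M : ℕ} {T : Finset ι}
    (hw : w ∈ lowerings v s) (hwT : ∀ j, j ∈ T ↔ M < w j) :
    truncate T M w ∈ lowerings (truncate T M v) fun m => if m < M then s m else 0 := by
  refine ⟨fun j => ?_, fun m => ?_⟩
  · have : w j ≤ v j := hw.1 j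
    simp only [truncate]
    split_ifs <;> omega
  by_cases hm : m < M
  · have hTw : ∀ j ∈ T, m < w j := fun j hj => hm.trans ((hwT j).1 hj)
    have hTv : ∀ j ∈ T, m < v j := fun j hj => (hTw j hj).trans_le (hw.1 j)
    have := hw.2 m
    rw [card_filter_lt_eq_card_filter_lt_truncate_add hm hTw,
      card_filter_lt_eq_card_filter_lt_truncate_add hm hTv] at this
    simp only [if_pos hm]
    omega
  · simp only [if_neg hm]
    rw [card_filter_lt_eq_zero (truncate_le T M w) (not_lt.1 hm),
      card_filter_lt_eq_zero (truncate_le T M v) (not_lt.1 hm)]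

lemma raise_mem_lowerings [DecidableEq ι] {v w : ι → ℕ} {s : ℕ → ℕ} {M : ℕ} {T : Finset ι}
    (hv : ∀ j, v j ≤ M + 1) (hs : ∀ m, M + 1 ≤ m → s m = 0) (hT : ∀ j ∈ T, M < v j)
    (hTcard : #T + s M = #{j | M < v j})
    (hw : w ∈ lowerings (truncate T M v) fun m => if m < M then s m else 0) :
    raise T M w ∈ lowerings v s := by
  obtain ⟨hwM, hwT⟩ := le_and_eq_zero_of_le_truncate hw.1
  have hraise : ∀ j, raise T M w j ≤ M + 1 := fun j => by
    have := hwM j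
    unfold raise
    split_ifs <;> omega
  refine ⟨fun j => ?_, fun m => ?_⟩
  · unfold raise
    split_ifs with hj
    · exact hT j hj
    · exact (hw.1 j).trans (by simp [truncate, hj])
  rcases lt_trichotomy m M with hm | rfl | hm
  · have := hw.2 m
    simp only [if_pos hm] at this
    rw [card_filter_lt_eq_card_filter_lt_truncate_add hm
        fun j hj => hm.trans ((mem_iff_lt_raise hwM j).1 hj),
      truncate_raise hwM hwT,
      card_filter_lt_eq_card_filter_lt_truncate_add hm fun j hj => hm.trans (hT j hj)]
    omega
  · have hfilter : ({j | m < raise T m w j} : Finset ι) = T := by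
      ext j
      simp [← mem_iff_lt_raise hwM]
    rw [hfilter, hTcard]
  · rw [card_filter_lt_eq_zero hraise hm, card_filter_lt_eq_zero hv hm, hs m hm]

def fiberEquiv [DecidableEq ι] {v : ι → ℕ} {s : ℕ → ℕ} {M : ℕ} {T : Finset ι}
    (hv : ∀ j, v j ≤ M + 1) (hs : ∀ m, M + 1 ≤ m → s m = 0) (hT : ∀ j ∈ T, M < v j)
    (hTcard : #T + s M = #{j | M < v j}) :
    {w : lowerings v s // ({j | M < w.1 j} : Finset ι) = T} ≃
      lowerings (truncate T M v) fun m => if m < M then s m else 0 where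
  toFun w := ⟨truncate T M w, truncate_mem_lowerings w.1.2 fun j => by simp [← w.2]⟩
  invFun w := ⟨⟨raise T M w, raise_mem_lowerings hv hs hT hTcard w.2⟩, by
    ext j
    simp [← mem_iff_lt_raise (le_and_eq_zero_of_le_truncate w.2.1).1]⟩
  left_inv w := Subtype.ext <| Subtype.ext <|
    raise_truncate (fun j => (w.1.2.1 j).trans (hv j)) fun j => by simp [← w.2]
  right_inv w := Subtype.ext <| truncate_raise (le_and_eq_zero_of_le_truncate w.2.1).1
    (le_and_eq_zero_of_le_truncate w.2.1).2

lemma card_fiber_lowerings [DecidableEq ι] {v : ι → ℕ} {s : ℕ → ℕ} {M : ℕ}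
    (hv : ∀ j, v j ≤ M + 1) (hs : ∀ m, M + 1 ≤ m → s m = 0) (T : Finset ι) :
    Nat.card {w : lowerings v s // ({j | M < w.1 j} : Finset ι) = T} =
      if T ⊆ ({j | M < v j} : Finset ι) ∧ #T + s M = #{j | M < v j} then
        Nat.card (lowerings (truncate T M v) fun m => if m < M then s m else 0)
      else 0 := by
  split_ifs with hT
  · exact Nat.card_congr (fiberEquiv hv hs (fun j hj => (mem_filter.1 (hT.1 hj)).2) hT.2)
  · rw [Nat.card_eq_zero]
    refine Or.inl ⟨fun ⟨⟨w, hw⟩, hwT⟩ => hT ⟨?_, hwT ▸ hw.2 M⟩⟩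
    intro j hj
    simp only [← hwT, mem_filter, mem_univ, true_and] at hj ⊢
    exact hj.trans_le (hw.1 j)

lemma card_filter_truncate_eq_add [DecidableEq ι] {v : ι → ℕ} {s : ℕ → ℕ} {M i : ℕ}
    {T : Finset ι} (hT : ∀ j ∈ T, M < v j) (hTcard : #T + s M = #{j | M < v j}) (hi : i < M) :
    #{j | truncate T M v j = i + 1} + (if i + 1 < M then s (i + 1) else 0) =
      #{j | v j = i + 1} + s (i + 1) := by
  have htrunc := card_filter_lt_eq_card_filter_eq_add (truncate T M v) i
  have hv := card_filter_lt_eq_card_filter_eq_add v i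
  have hi' := card_filter_lt_eq_card_filter_lt_truncate_add hi fun j hj => hi.trans (hT j hj)
  split_ifs with hiM
  · have := card_filter_lt_eq_card_filter_lt_truncate_add hiM fun j hj => hiM.trans (hT j hj)
    omega
  · obtain rfl : i + 1 = M := by omega
    rw [card_filter_lt_eq_zero (truncate_le T (i + 1) v) le_rfl] at htrunc
    omega

theorem card_lowerings {M : ℕ} :
    ∀ {v : ι → ℕ} {s : ℕ → ℕ}, (∀ j, v j ≤ M) → (∀ m, M ≤ m → s m = 0) →
      Nat.card (lowerings v s) =
        ∏ i ∈ range M, (#{j | v j = i + 1} + s (i + 1)).choose (s i) := by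
  classical
  induction M with
  | zero =>
    intro v s hv hs
    obtain rfl : v = 0 := funext fun j => Nat.le_zero.1 (hv j)
    rw [lowerings_zero fun m => hs m m.zero_le, prod_range_zero, Nat.card_unique]
  | succ M ih =>
    intro v s hv hs
    have : Finite (lowerings v s) := (finite_lowerings v s).to_subtype
    set A : Finset ι := {j | M < v j}
    have hA : #A = #{j | v j = M + 1} := by
      rw [card_filter_lt_eq_card_filter_eq_add, card_filter_lt_eq_zero hv le_rfl, add_zero]
    calc Nat.card (lowerings v s)
        = ∑ T : Finset ι, Nat.card {w : lowerings v s // ({j | M < w.1 j} : Finset ι) = T} := by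
          rw [← Nat.card_sigma, Nat.card_congr (Equiv.sigmaFiberEquiv _)]
      _ = ∑ T : Finset ι, if T ⊆ A ∧ #T + s M = #A then
            ∏ i ∈ range M, (#{j | v j = i + 1} + s (i + 1)).choose (s i) else 0 := by
          refine sum_congr rfl fun T _ => ?_
          rw [card_fiber_lowerings hv hs T]
          split_ifs with hT
          · rw [ih (truncate_le T M v) fun m hm => if_neg (not_lt.2 hm)]
            refine prod_congr rfl fun i hi => ?_
            rw [card_filter_truncate_eq_add (fun j hj => (mem_filter.1 (hT.1 hj)).2) hT.2
              (mem_range.1 hi), if_pos (mem_range.1 hi)]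
          · rfl
      _ = (#A).choose (s M) *
            ∏ i ∈ range M, (#{j | v j = i + 1} + s (i + 1)).choose (s i) := by
          rw [← sum_filter, sum_const, card_subsets_card_add_eq, smul_eq_mul]
      _ = ∏ i ∈ range (M + 1), (#{j | v j = i + 1} + s (i + 1)).choose (s i) := by
          rw [prod_range_succ, mul_comm, hs (M + 1) le_rfl, add_zero, hA]

def subLeftEquiv {v : ι → ℕ} {s : ℕ → ℕ} {M : ℕ} (hv : ∀ j, v j ≤ M)
    (hs : ∀ m, M ≤ m → s m = 0) :
    {u : ι → ℕ // (∀ j, u j ≤ v j) ∧ ∑ j, u j = ∑ m ∈ range M, s m ∧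
        ∀ i, (#{j | v j - u j = i + 1} : ℤ) = #{j | v j = i + 1} - s i + s (i + 1)} ≃
      lowerings v s where
  toFun u := ⟨v - u, fun j => Nat.sub_le _ _,
    (card_filter_eq_sub_add_iff hv (fun j => (Nat.sub_le _ _).trans (hv j)) hs).1 u.2.2.2⟩
  invFun w := ⟨v - w, fun j => Nat.sub_le _ _, by
    have := sum_add_sum_eq_sum_of_mem_lowerings hv w.2
    rw [Pi.sub_def, sum_tsub_distrib _ fun j _ => w.2.1 j]
    omega, by
    have hw : ∀ j, v j - (v j - w.1 j) = w.1 j := fun j => Nat.sub_sub_self (w.2.1 j)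
    simpa only [Pi.sub_apply, hw] using
      (card_filter_eq_sub_add_iff hv (fun j => (w.2.1 j).trans (hv j)) hs).2 w.2.2⟩
  left_inv u := Subtype.ext <| funext fun j => Nat.sub_sub_self (u.2.1 j)
  right_inv w := Subtype.ext <| funext fun j => Nat.sub_sub_self (w.2.1 j)

end Lowering

/-- The number of `u ∈ ℕ^n` with `u ≤ v`, `Σ_j u_j = k = Σ_i s_i` and
`bar(v - u) = bar v ⊖ s = bar v - s + Ls` equals
`(bar v + Ls choose s) = ∏_i ((bar v_i + s_{i+1}) choose s_i)`.
Sequences in `ℕ^∞` are 0-based here: index `i` stands for position `i+1`. -/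
theorem stmt6 (n : ℕ) (v : Fin n → ℕ) (s : ℕ → ℕ) (hs : {i | s i ≠ 0}.Finite)
    (k : ℕ) (hk : k = ∑ᶠ i, s i) :
    Nat.card {u : Fin n → ℕ // (∀ j, u j ≤ v j) ∧ (∑ j, u j = k) ∧
        ∀ i, (countVec (fun j => v j - u j) i : ℤ) =
          (countVec v i : ℤ) - s i + s (i + 1)} =
      ∏ᶠ i, (countVec v i + s (i + 1)).choose (s i) := by
  obtain ⟨B, hB⟩ := hs.bddAbove
  obtain ⟨C, hC⟩ := (Set.finite_range v).bddAbove
  obtain ⟨M, hvM, hsM⟩ : ∃ M, (∀ j, v j ≤ M) ∧ ∀ i, M ≤ i → s i = 0 :=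
    ⟨max C (B + 1), fun j => (hC (Set.mem_range_self j)).trans (le_max_left _ _),
      fun i hi => by_contra fun h => by have := hB h; omega⟩
  have hsupp : Function.support s ⊆ range M := fun i hi =>
    mem_range.2 (not_le.1 fun h => hi (hsM i h))
  rw [finsum_eq_sum_of_support_subset s hsupp] at hk
  subst hk
  rw [finprod_eq_prod_of_mulSupport_subset _ fun i hi => hsupp fun h => hi (by simp [h])]
  exact (Nat.card_congr (Lowering.subLeftEquiv hvM hsM)).trans
    (Lowering.card_lowerings hvM hsM)
end

section
/- Let v ∈ ℕ^n, let n_0 = #{j : v_j > 0} be the number of nonzero entries of v, and let s ∈ ℕ^∞ be finitely supported with s ≤ bar v + Ls componentwise. Then for every i ≥ 1, bar v_i + s_{i+1} ≤ Σ_{j=i}^∞ bar v_j ≤ n_0. -/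
open scoped BigOperators

open Finset

theorem le_of_le_add_succ_of_add_succ_le {α : Type*} [AddCommMonoid α] [PartialOrder α]
    [CanonicallyOrderedAdd α] [IsOrderedAddMonoid α] {s t c : ℕ → α}
    (hfin : {k | s k ≠ 0}.Finite) (hs : ∀ k, s k ≤ c k + s (k + 1))
    (ht : ∀ k, c k + t (k + 1) ≤ t k) (k : ℕ) : s k ≤ t k := by
  obtain ⟨N, hN⟩ := hfin.bddAbove
  induction hd : N + 1 - k generalizing k with
  | zero =>
    have hsk : s k = 0 := by
      by_contra h
      have := hN h
      omega
    exact hsk ▸ zero_le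
  | succ d ih =>
    calc s k ≤ c k + s (k + 1) := hs k
      _ ≤ c k + t (k + 1) := add_le_add_right (ih (k + 1) (by omega)) _
      _ ≤ t k := ht k

section countVec

variable {n : ℕ} (v : Fin n → ℕ)

theorem card_filter_lt_eq_countVec_add (k : ℕ) :
    #{j | k < v j} = countVec v k + #{j | k + 1 < v j} := by
  rw [countVec, ← card_union_of_disjoint (disjoint_filter.2 fun j _ h => by omega), ← filter_or]
  congr 1
  ext j
  simp only [mem_filter, mem_univ, true_and]
  omega

theorem countVec_eq_zero_of_sup_le {i : ℕ} (hi : univ.sup v ≤ i) : countVec v i = 0 := by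
  rw [countVec, card_eq_zero, filter_eq_empty_iff]
  intro j _ hj
  have := (le_sup (mem_univ j)).trans hi
  omega

theorem finsum_countVec_tail (k : ℕ) :
    (∑ᶠ i : ℕ, if k ≤ i then countVec v i else 0) = #{j | k < v j} := by
  have hsupp : (Function.support fun i => if k ≤ i then countVec v i else 0) ⊆
      Ico k (univ.sup v) := by
    intro i hi
    simp only [Function.mem_support, ne_eq, ite_eq_right_iff, not_forall] at hi
    obtain ⟨hki, hi⟩ := hi
    simp only [coe_Ico, Set.mem_Ico]
    exact ⟨hki, not_le.1 fun h => hi (countVec_eq_zero_of_sup_le v h)⟩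
  rw [finsum_eq_sum_of_support_subset _ hsupp,
    sum_congr rfl fun i hi => if_pos (mem_Ico.1 hi).1,
    card_eq_sum_card_fiberwise (f := fun j => v j - 1) (t := Ico k (univ.sup v)) ?_]
  · refine sum_congr rfl fun i hi => ?_
    rw [filter_filter, countVec]
    congr 1
    refine filter_congr fun j _ => ?_
    rw [mem_Ico] at hi
    omega
  · intro j hj
    simp only [coe_filter, mem_univ, true_and, Set.mem_ofPred_eq] at hj
    have : v j ≤ univ.sup v := le_sup (mem_univ j)
    simp only [coe_Ico, Set.mem_Ico]
    omega

end countVec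

/-- If `n_0 = #{j : v_j > 0}` and `s ∈ ℕ^∞` is finitely supported with `s ≤ bar v + Ls`,
then for every `i ≥ 1`, `bar v_i + s_{i+1} ≤ Σ_{j=i}^∞ bar v_j ≤ n_0`.
Sequences in `ℕ^∞` are 0-based here: index `k` stands for position `k+1`. -/
theorem stmt15 (n : ℕ) (v : Fin n → ℕ)
    (n0 : ℕ) (hn0 : n0 = (Finset.univ.filter fun j => 0 < v j).card)
    (s : ℕ → ℕ) (hfin : {k | s k ≠ 0}.Finite)
    (hs : ∀ k, s k ≤ countVec v k + s (k + 1)) :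
    ∀ k : ℕ,
      countVec v k + s (k + 1) ≤ (∑ᶠ i : ℕ, if k ≤ i then countVec v i else 0) ∧
      (∑ᶠ i : ℕ, if k ≤ i then countVec v i else 0) ≤ n0 := by
  have hdom : ∀ k, s k ≤ #{j | k < v j} :=
    le_of_le_add_succ_of_add_succ_le hfin hs fun k => (card_filter_lt_eq_countVec_add v k).ge
  intro k
  rw [finsum_countVec_tail]
  constructor
  · rw [card_filter_lt_eq_countVec_add]
    exact add_le_add_right (hdom (k + 1)) _
  · rw [hn0]
    exact card_le_card (monotone_filter_right _ fun j hj => by omega)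
end
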